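/- arXiv:1902.02307 — 4 statements merged into one kernel-verified Lean document; each statement's English description precedes it below -/
import Mathlib

section
/- Let a group G act on a tree T in which every vertex has degree at least two, such that the action is transitive on the undirected edges of T and some element of G inverts some edge (swaps its two endpoints). Then for any vertex v of T and any edge e of T incident to v, the homomorphism induced by the subgroup inclusions from the amalgamated free product St_G(v) *_{St_G(v) ∩ St_G(e)} St_G(e) to G is an isomorphism; that is, G is the free product of the stabilizer of v and the setwise stabilizer of e amalgamated over their intersection. -/
open SimpleGraph Set Pointwise

namespace CayleyConn2

/-- The Cayley graph of `G` with respect to `S`: `g` adjacent to `h` iff `g ≠ h` and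
`g⁻¹ * h ∈ S ∪ S⁻¹`. -/
def cayley (G : Type*) [Group G] (S : Set G) : SimpleGraph G :=
  SimpleGraph.fromRel (fun g h => g⁻¹ * h ∈ S)

/-- A graph is cubic if every vertex has degree `3`. -/
def Cubic {V : Type*} (Γ : SimpleGraph V) : Prop :=
  ∀ v : V, (Γ.neighborSet v).ncard = 3

/-- A graph has connectivity two: it is connected, deleting any one vertex leaves it
connected, and some set of two vertices disconnects it. -/
def ConnectivityTwo {V : Type*} (Γ : SimpleGraph V) : Prop :=
  Γ.Connected ∧ (∀ v : V, (Γ.induce ({v}ᶜ : Set V)).Connected) ∧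
    ∃ X : Set V, X.ncard = 2 ∧ ¬ (Γ.induce (Xᶜ : Set V)).Connected

/-- `(A, B)` is a separation of `Γ`. -/
def IsSeparation {V : Type*} (Γ : SimpleGraph V) (A B : Set V) : Prop :=
  A ∪ B = Set.univ ∧ ∀ ⦃u v : V⦄, Γ.Adj u v → (u ∈ A ∧ v ∈ A) ∨ (u ∈ B ∧ v ∈ B)

/-- The order of a separation `(A, B)`. -/
noncomputable def sepOrder {V : Type*} (A B : Set V) : ℕ := (A ∩ B).ncard

/-- `u` and `v` are joined by a walk all of whose vertices lie in `s`. -/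
def ReachIn {V : Type*} (Γ : SimpleGraph V) (s : Set V) (u v : V) : Prop :=
  ∃ p : Γ.Walk u v, ∀ w ∈ p.support, w ∈ s

/-- `u` and `v` are joined by a walk avoiding the vertex set `X`. -/
def ReachAvoiding {V : Type*} (Γ : SimpleGraph V) (X : Set V) (u v : V) : Prop :=
  ReachIn Γ Xᶜ u v

/-- `r` is a (one-way infinite) ray of `Γ`. -/
def IsRay {V : Type*} (Γ : SimpleGraph V) (r : ℕ → V) : Prop :=
  Function.Injective r ∧ ∀ n : ℕ, Γ.Adj (r n) (r (n + 1))

/-- Two rays are equivalent (belong to the same end) if no finite vertex set separates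
tails of them. -/
def RayEquiv {V : Type*} (Γ : SimpleGraph V) (r₁ r₂ : ℕ → V) : Prop :=
  ∀ X : Set V, X.Finite → ∃ N : ℕ, ∀ m n : ℕ, N ≤ m → N ≤ n →
    ReachAvoiding Γ X (r₁ m) (r₂ n)

/-- The ray `r` has a tail in the vertex set `s`. -/
def HasTailIn {V : Type*} (r : ℕ → V) (s : Set V) : Prop :=
  ∃ N : ℕ, ∀ n : ℕ, N ≤ n → r n ∈ s

/-- The separation `(A, B)` distinguishes the ends represented by `r₁` and `r₂`. -/
def SepDistinguishes {V : Type*} (A B : Set V) (r₁ r₂ : ℕ → V) : Prop :=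
  (HasTailIn r₁ (A \ B) ∧ HasTailIn r₂ (B \ A)) ∨
    (HasTailIn r₂ (A \ B) ∧ HasTailIn r₁ (B \ A))

/-- The separation `(A, B)` distinguishes the ends represented by `r₁` and `r₂`
efficiently: no separation of smaller order distinguishes them. -/
def SepDistinguishesEff {V : Type*} (Γ : SimpleGraph V) (A B : Set V) (r₁ r₂ : ℕ → V) :
    Prop :=
  SepDistinguishes A B r₁ r₂ ∧
    ∀ C D : Set V, IsSeparation Γ C D → sepOrder C D < sepOrder A B →
      ¬ SepDistinguishes C D r₁ r₂

/-- The set `side` contains a component of `Γ - X` whose neighbourhood is all of `X`. -/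
def TightSide {V : Type*} (Γ : SimpleGraph V) (X side : Set V) : Prop :=
  ∃ v ∈ side, v ∉ X ∧ (∀ c : V, ReachAvoiding Γ X v c → c ∈ side) ∧
    ∀ x ∈ X, ∃ c : V, ReachAvoiding Γ X v c ∧ Γ.Adj x c

/-- The separation `(A, B)` is tight. -/
def TightSep {V : Type*} (Γ : SimpleGraph V) (A B : Set V) : Prop :=
  TightSide Γ (A ∩ B) (A \ B) ∧ TightSide Γ (A ∩ B) (B \ A)

/-- The partial order on separations. -/
def SepLE {V : Type*} (A B C D : Set V) : Prop := A ⊆ C ∧ D ⊆ B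

/-- Two separations are nested. -/
def Nested {V : Type*} (A B C D : Set V) : Prop :=
  SepLE A B C D ∨ SepLE C D A B ∨ SepLE A B D C ∨ SepLE D C A B

/-- A separation `(A,B)` of order two with `A ∩ B = {x,y}` is of Type I. -/
def TypeI {V : Type*} (Γ : SimpleGraph V) (A B : Set V) : Prop :=
  ∃ x y : V, x ≠ y ∧ A ∩ B = {x, y} ∧ Γ.Adj x y ∧
    (Γ.neighborSet x ∩ (A \ B)).ncard = 1 ∧ (Γ.neighborSet x ∩ (B \ A)).ncard = 1 ∧
    (Γ.neighborSet y ∩ (A \ B)).ncard = 1 ∧ (Γ.neighborSet y ∩ (B \ A)).ncard = 1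

/-- A separation `(A,B)` of order two with `A ∩ B = {x,y}` is of Type II. -/
def TypeII {V : Type*} (Γ : SimpleGraph V) (A B : Set V) : Prop :=
  ∃ x y : V, x ≠ y ∧ A ∩ B = {x, y} ∧ ¬ Γ.Adj x y ∧
    (((Γ.neighborSet x ∩ (A \ B)).ncard = 2 ∧ (Γ.neighborSet x ∩ (B \ A)).ncard = 1 ∧
      (Γ.neighborSet y ∩ (A \ B)).ncard = 2 ∧ (Γ.neighborSet y ∩ (B \ A)).ncard = 1) ∨
     ((Γ.neighborSet x ∩ (A \ B)).ncard = 1 ∧ (Γ.neighborSet x ∩ (B \ A)).ncard = 2 ∧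
      (Γ.neighborSet y ∩ (A \ B)).ncard = 1 ∧ (Γ.neighborSet y ∩ (B \ A)).ncard = 2))

/-- A separation `(A,B)` of order two with `A ∩ B = {x,y}` is of Type III. -/
def TypeIII {V : Type*} (Γ : SimpleGraph V) (A B : Set V) : Prop :=
  ∃ x y : V, x ≠ y ∧ A ∩ B = {x, y} ∧ ¬ Γ.Adj x y ∧
    (Γ.neighborSet x ∩ (A \ B)).ncard = 2 ∧ (Γ.neighborSet x ∩ (B \ A)).ncard = 1 ∧
    (Γ.neighborSet y ∩ (A \ B)).ncard = 1 ∧ (Γ.neighborSet y ∩ (B \ A)).ncard = 2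

/-- A tree-decomposition of `Γ` modelled on the graph `T`. -/
structure TreeDecomp {ι V : Type*} (T : SimpleGraph ι) (Γ : SimpleGraph V) where
  part : ι → Set V
  covers : ∀ v : V, ∃ t : ι, v ∈ part t
  edge_in_part : ∀ ⦃u v : V⦄, Γ.Adj u v → ∃ t : ι, u ∈ part t ∧ v ∈ part t
  path_inter : ∀ ⦃t₁ t₂ t₃ : ι⦄ (p : T.Walk t₁ t₃), p.IsPath → t₂ ∈ p.support →
    part t₁ ∩ part t₃ ⊆ part t₂

/-- The nodes on the side of `t` of the edge `tt'`: those reachable from `t` by a walk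
avoiding the edge `tt'`. -/
def sideNodes {ι : Type*} (T : SimpleGraph ι) (t t' : ι) : Set ι :=
  {s : ι | ∃ p : T.Walk t s, s(t, t') ∉ p.edges}

/-- `W_{t∖t'}`: the union of the parts on the side of `t` of the edge `tt'`. -/
def TreeDecomp.W {ι V : Type*} {T : SimpleGraph ι} {Γ : SimpleGraph V}
    (D : TreeDecomp T Γ) (t t' : ι) : Set V :=
  ⋃ s ∈ sideNodes T t t', D.part s

/-- The torso of the part `V_t` of a tree-decomposition. -/
def TreeDecomp.torso {ι V : Type*} {T : SimpleGraph ι} {Γ : SimpleGraph V}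
    (D : TreeDecomp T Γ) (t : ι) : SimpleGraph (D.part t) where
  Adj u v := u ≠ v ∧ (Γ.Adj u v ∨
    ∃ t' : ι, T.Adj t t' ∧ (u : V) ∈ D.part t' ∧ (v : V) ∈ D.part t')
  symm := ⟨by
    rintro u v ⟨hne, h | ⟨t', h1, h2, h3⟩⟩
    · exact ⟨hne.symm, Or.inl h.symm⟩
    · exact ⟨hne.symm, Or.inr ⟨t', h1, h3, h2⟩⟩⟩
  loopless := ⟨fun u h => h.1 rfl⟩

/-- The induced subgraph on `s` is a finite cycle: `s` is finite and nonempty, induces a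
connected subgraph, and every vertex of `s` has exactly two neighbours inside `s`. -/
def IsCycleSet {V : Type*} (Γ : SimpleGraph V) (s : Set V) : Prop :=
  s.Finite ∧ s.Nonempty ∧ (Γ.induce s).Connected ∧
    ∀ v ∈ s, (Γ.neighborSet v ∩ s).ncard = 2

/-- The standing setup: `G` is an infinite group, finitely generated by `S`, whose Cayley
graph is cubic of connectivity two, and `(T, 𝒱)` is a tree-decomposition of the Cayley
graph with adhesion sets of size two whose induced separations are tight, distinguish two
ends efficiently and are pairwise nested, such that the left multiplication action of `G`
maps parts to parts and is transitive on the induced separations. -/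
structure Standing (G : Type*) [Group G] (S : Set G) {ι : Type*} (T : SimpleGraph ι)
    (D : TreeDecomp T (cayley G S)) : Prop where
  infinite : Infinite G
  Sfin : S.Finite
  Sgen : Subgroup.closure S = ⊤
  cubic : Cubic (cayley G S)
  conn2 : ConnectivityTwo (cayley G S)
  tree : T.IsTree
  adhesion_card : ∀ ⦃t t' : ι⦄, T.Adj t t' → (D.part t ∩ D.part t').encard = 2
  ind_sep : ∀ ⦃t t' : ι⦄, T.Adj t t' → IsSeparation (cayley G S) (D.W t t') (D.W t' t)
  ind_tight : ∀ ⦃t t' : ι⦄, T.Adj t t' → TightSep (cayley G S) (D.W t t') (D.W t' t)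
  ind_dist : ∀ ⦃t t' : ι⦄, T.Adj t t' → ∃ r₁ r₂ : ℕ → G, IsRay (cayley G S) r₁ ∧
    IsRay (cayley G S) r₂ ∧ ¬ RayEquiv (cayley G S) r₁ r₂ ∧
    SepDistinguishesEff (cayley G S) (D.W t t') (D.W t' t) r₁ r₂
  nested : ∀ ⦃t t' s s' : ι⦄, T.Adj t t' → T.Adj s s' →
    Nested (D.W t t') (D.W t' t) (D.W s s') (D.W s' s)
  parts_invariant : ∀ (g : G) (t : ι), ∃ t' : ι, (g * ·) '' D.part t = D.part t'
  sep_trans : ∀ ⦃t t' s s' : ι⦄, T.Adj t t' → T.Adj s s' →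
    ∃ g : G, (g * ·) '' D.W t t' = D.W s s' ∧ (g * ·) '' D.W t' t = D.W s' s

/-- The set of relators of an amalgamated free product. -/
def AmalgRels {A B C : Type*} [Group A] [Group B] [Group C]
    (f₁ : C →* A) (f₂ : C →* B) : Set (Monoid.Coprod A B) :=
  {x : Monoid.Coprod A B |
    ∃ c : C, x = Monoid.Coprod.inl (f₁ c) * (Monoid.Coprod.inr (f₂ c))⁻¹}

/-- The amalgamated free product `A *_C B` along `f₁ : C →* A` and `f₂ : C →* B`,
as the pushout of `f₁` and `f₂`. -/
def AmalgamatedProduct {A B C : Type*} [Group A] [Group B] [Group C]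
    (f₁ : C →* A) (f₂ : C →* B) : Type _ :=
  Monoid.Coprod A B ⧸ Subgroup.normalClosure (AmalgRels f₁ f₂)

instance {A B C : Type*} [Group A] [Group B] [Group C] (f₁ : C →* A) (f₂ : C →* B) :
    Group (AmalgamatedProduct f₁ f₂) :=
  QuotientGroup.Quotient.group _

/-- The canonical homomorphism from an amalgamated free product induced by homomorphisms
on the two factors that agree on the amalgamated subgroup. -/
def amalgLift {A B C G : Type*} [Group A] [Group B] [Group C] [Group G]
    (f₁ : C →* A) (f₂ : C →* B) (g₁ : A →* G) (g₂ : B →* G)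
    (hcomm : ∀ c : C, g₁ (f₁ c) = g₂ (f₂ c)) : AmalgamatedProduct f₁ f₂ →* G :=
  QuotientGroup.lift _ (Monoid.Coprod.lift g₁ g₂) (by
    apply Subgroup.normalClosure_le_normal
    rintro y ⟨c, rfl⟩
    simp [MonoidHom.mem_ker, hcomm c])

/-- The setwise stabilizer of the edge `{u, w}` (under the pointwise action on sets). -/
def edgeStab (G : Type*) [Group G] {ι : Type*} [MulAction G ι] (u w : ι) : Subgroup G :=
  MulAction.stabilizer G ({u, w} : Set ι)

section TreeAux


variable {ι : Type*} {T : SimpleGraph ι}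

lemma aux_concat_isPath {x y z : ι} {p : T.Walk x y} (hp : p.IsPath) (h : T.Adj y z)
    (hz : z ∉ p.support) : (p.concat h).IsPath := by
  rw [← Walk.isPath_reverse_iff, Walk.reverse_concat]
  rw [Walk.cons_isPath_iff]
  refine ⟨hp.reverse, ?_⟩
  rwa [Walk.support_reverse, List.mem_reverse]

lemma aux_end_of_dist {x y z : ι} {p : T.Walk x y} (hz : z ∈ p.support)
    (hd : p.length ≤ T.dist x z) : z = y := by
  classical
  have hspec := p.take_spec hz
  have hlen : (p.takeUntil z hz).length + (p.dropUntil z hz).length = p.length := by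
    rw [← Walk.length_append, hspec]
  have h1 : T.dist x z ≤ (p.takeUntil z hz).length := SimpleGraph.dist_le _
  have h2 : (p.dropUntil z hz).length = 0 := by omega
  exact (Walk.eq_of_length_eq_zero h2)

lemma tree_gate_unique (htree : T.IsTree) {u w w' y : ι} (h1 : T.Adj u w) (h2 : T.Adj u w')
    (hne : w ≠ w') (hw : T.dist y w + 1 = T.dist y u) (hw' : T.dist y w' + 1 = T.dist y u) :
    False := by
  classical
  have hconn := htree.isConnected
  obtain ⟨p, hp, hpl⟩ := (hconn y w).exists_path_of_dist
  obtain ⟨p', hp', hpl'⟩ := (hconn y w').exists_path_of_dist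
  have hup : u ∉ p.support := by
    intro hu
    have := SimpleGraph.dist_le (p.takeUntil u hu)
    have := p.length_takeUntil_le hu
    omega
  have hup' : u ∉ p'.support := by
    intro hu
    have := SimpleGraph.dist_le (p'.takeUntil u hu)
    have := p'.length_takeUntil_le hu
    omega
  have hq : (p.concat h1.symm).IsPath := aux_concat_isPath hp h1.symm hup
  have hq' : (p'.concat h2.symm).IsPath := aux_concat_isPath hp' h2.symm hup'
  have huniq := (isTree_iff_existsUnique_path.mp htree).2 y u
  have heq : p.concat h1.symm = p'.concat h2.symm := huniq.unique hq hq'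
  have hwsup : w ∈ (p'.concat h2.symm).support := by
    rw [← heq, Walk.support_concat]
    rw [List.mem_append]
    exact Or.inl p.end_mem_support
  rw [Walk.support_concat, List.mem_append] at hwsup
  rcases hwsup with hwsup | hwu
  · have : w = w' := aux_end_of_dist hwsup (by omega)
    exact hne this
  · exact h1.ne (List.mem_singleton.mp hwu).symm

lemma tree_dist_ne (htree : T.IsTree) {u w : ι} (h : T.Adj u w) (x : ι) :
    T.dist x u ≠ T.dist x w := by
  intro heq
  classical
  have hconn := htree.isConnected
  obtain ⟨p, hp, hpl⟩ := (hconn x u).exists_path_of_dist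
  obtain ⟨p', hp', hpl'⟩ := (hconn x w).exists_path_of_dist
  have hdw : T.dist w u = 1 := by
    rw [SimpleGraph.dist_eq_one_iff_adj]; exact h.symm
  have hwp : w ∉ p.support := by
    intro hw
    have h1 : T.dist x w ≤ (p.takeUntil w hw).length := SimpleGraph.dist_le _
    have h2 : T.dist w u ≤ (p.dropUntil w hw).length := SimpleGraph.dist_le _
    have hlen : (p.takeUntil w hw).length + (p.dropUntil w hw).length = p.length := by
      rw [← Walk.length_append, p.take_spec hw]
    omega
  have hq : (p.concat h).IsPath := aux_concat_isPath hp h hwp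
  have huniq := (isTree_iff_existsUnique_path.mp htree).2 x w
  have heq2 : p.concat h = p' := huniq.unique hq hp'
  have : (p.concat h).length = p'.length := by rw [heq2]
  rw [Walk.length_concat] at this
  omega

lemma tree_dist_succ (hconn : T.Connected) {u w : ι} (h : T.Adj u w) (x : ι)
    (hlt : T.dist x u < T.dist x w) : T.dist x w = T.dist x u + 1 := by
  have h1 : T.dist x w ≤ T.dist x u + T.dist u w := hconn.dist_triangle
  have h2 : T.dist u w = 1 := by rw [SimpleGraph.dist_eq_one_iff_adj]; exact h
  omega

section Action
variable {G : Type*} [Group G] [MulAction G ι]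

lemma dist_smul_eq (hconn : T.Connected)
    (hact : ∀ (g : G) ⦃u w : ι⦄, T.Adj u w → T.Adj (g • u) (g • w))
    (g : G) (x y : ι) : T.dist (g • x) (g • y) = T.dist x y := by
  have key : ∀ (h : G) (a b : ι), T.dist (h • a) (h • b) ≤ T.dist a b := by
    intro h a b
    obtain ⟨p, hp, hpl⟩ := (hconn a b).exists_path_of_dist
    let f : T →g T := ⟨fun z => h • z, fun hz => hact h hz⟩
    have := SimpleGraph.dist_le (p.map f)
    rwa [Walk.length_map, hpl] at this
  refine le_antisymm (key g x y) ?_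
  have := key g⁻¹ (g • x) (g • y)
  simpa using this

/-- The alternating-word relation for the ping-pong argument. -/
def AltRel (A B : Subgroup G) (g h : G) : Prop :=
  (g ∈ A ∧ g ∉ B ∧ h ∈ B ∧ h ∉ A) ∨ (g ∈ B ∧ g ∉ A ∧ h ∈ A ∧ h ∉ B)

/-- Alternating lists of letters from `A \ B` and `B \ A`. -/
def AltList (A B : Subgroup G) (l : List G) : Prop :=
  l.Chain' (AltRel A B) ∧ ∀ g ∈ l, (g ∈ A ∧ g ∉ B) ∨ (g ∈ B ∧ g ∉ A)

/-- The ping-pong lemma on a tree: an alternating word acts nontrivially. -/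
lemma pingpong (htree : T.IsTree)
    (hact : ∀ (g : G) ⦃u w : ι⦄, T.Adj u w → T.Adj (g • u) (g • w))
    {v o : ι} (hvo : T.Adj v o) (A B : Subgroup G)
    (hAv : ∀ a ∈ A, a • v = v)
    (hAB : ∀ a ∈ A, a ∉ B → a • o ≠ o)
    (hBswap : ∀ b ∈ B, b ∉ A → b • v = o ∧ b • o = v) :
    ∀ l : List G, AltList A B l → l ≠ [] → l.prod ≠ 1 := by
  have hconn := htree.isConnected
  have hd := dist_smul_eq (T := T) hconn hact
  have hdvo : T.dist v o = 1 := by rw [SimpleGraph.dist_eq_one_iff_adj]; exact hvo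
  have hdov : T.dist o v = 1 := by rw [SimpleGraph.dist_eq_one_iff_adj]; exact hvo.symm
  have hdvv : T.dist v v = 0 := SimpleGraph.dist_self
  have hdoo : T.dist o o = 0 := SimpleGraph.dist_self
  -- X = closer to v, Y = closer to o
  have hAmapY : ∀ a ∈ A, a ∉ B → ∀ y : ι, T.dist y o < T.dist y v →
      T.dist (a • y) v < T.dist (a • y) o := by
    intro a haA haB y hy
    have hyd : T.dist y v = T.dist y o + 1 := tree_dist_succ hconn hvo.symm y hy
    have hao' : T.Adj v (a • o) := by
      have := hact a hvo
      rwa [hAv a haA] at this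
    have hne : a • o ≠ o := hAB a haA haB
    have h1 : T.dist (a • y) v = T.dist y v := by
      conv_lhs => rw [← hAv a haA]
      exact hd a y v
    have h2 : T.dist (a • y) (a • o) = T.dist y o := hd a y o
    by_contra hnot
    push_neg at hnot
    have hne2 : T.dist (a • y) v ≠ T.dist (a • y) o := tree_dist_ne htree hvo (a • y)
    have hlt : T.dist (a • y) o < T.dist (a • y) v := by omega
    have h3 : T.dist (a • y) v = T.dist (a • y) o + 1 := tree_dist_succ hconn hvo.symm _ hlt
    exact tree_gate_unique htree hvo hao' (Ne.symm hne)
      (show T.dist (a • y) o + 1 = T.dist (a • y) v by omega)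
      (show T.dist (a • y) (a • o) + 1 = T.dist (a • y) v by omega)
  have hBmapY : ∀ b ∈ B, b ∉ A → ∀ x : ι, T.dist x v < T.dist x o →
      T.dist (b • x) o < T.dist (b • x) v := by
    intro b hbB hbA x hx
    obtain ⟨hbv, hbo⟩ := hBswap b hbB hbA
    have h1 : T.dist (b • x) o = T.dist x v := by
      conv_lhs => rw [← hbv]
      exact hd b x v
    have h2 : T.dist (b • x) v = T.dist x o := by
      conv_lhs => rw [← hbo]
      exact hd b x o
    omega
  have J : ∀ l : List G, AltList A B l → ∀ g t, l = g :: t →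
      ((g ∈ A ∧ g ∉ B) →
        (T.dist (l.prod • v) v < T.dist (l.prod • v) o ∧
         T.dist (l.prod • o) v < T.dist (l.prod • o) o)) ∧
      ((g ∈ B ∧ g ∉ A) →
        ((l.prod • v = o ∧ l.prod • o = v) ∨
         (T.dist (l.prod • v) o < T.dist (l.prod • v) v ∧
          T.dist (l.prod • o) o < T.dist (l.prod • o) v))) := by
    intro l
    induction l with
    | nil => intro _ g t h; cases h
    | cons gh tl ih =>
      rintro ⟨hch, hmem⟩ g t heq
      cases heq
      have htail : AltList A B tl :=
        ⟨hch.tail, fun x hx => hmem x (List.mem_cons_of_mem _ hx)⟩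
      constructor
      · rintro ⟨hgA, hgB⟩
        cases tl with
        | nil =>
          simp only [List.prod_cons, List.prod_nil, mul_one]
          constructor
          · rw [hAv gh hgA]; omega
          · have := hAmapY gh hgA hgB o (by omega)
            exact this
        | cons g₂ t₂ =>
          have hrel : AltRel A B gh g₂ := (List.isChain_cons_cons.mp hch).1
          have hg₂ : g₂ ∈ B ∧ g₂ ∉ A := by
            rcases hrel with ⟨_, _, h3, h4⟩ | ⟨h1, _, _, _⟩
            · exact ⟨h3, h4⟩
            · exact absurd h1 hgB
          have IH := ((ih htail g₂ t₂ rfl).2 hg₂)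
          rw [List.prod_cons, mul_smul, mul_smul]
          rcases IH with ⟨e1, e2⟩ | ⟨d1, d2⟩
          · rw [e1, e2]
            constructor
            · exact hAmapY gh hgA hgB o (by omega)
            · rw [hAv gh hgA]; omega
          · exact ⟨hAmapY gh hgA hgB _ d1, hAmapY gh hgA hgB _ d2⟩
      · rintro ⟨hgB, hgA⟩
        cases tl with
        | nil =>
          left
          simp only [List.prod_cons, List.prod_nil, mul_one]
          exact hBswap gh hgB hgA
        | cons g₂ t₂ =>
          right
          have hrel : AltRel A B gh g₂ := (List.isChain_cons_cons.mp hch).1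
          have hg₂ : g₂ ∈ A ∧ g₂ ∉ B := by
            rcases hrel with ⟨h1, _, _, _⟩ | ⟨_, _, h3, h4⟩
            · exact absurd h1 hgA
            · exact ⟨h3, h4⟩
          have IH := ((ih htail g₂ t₂ rfl).1 hg₂)
          rw [List.prod_cons, mul_smul, mul_smul]
          exact ⟨hBmapY gh hgB hgA _ IH.1, hBmapY gh hgB hgA _ IH.2⟩
  intro l hAlt hne hprod1
  obtain ⟨g, t, rfl⟩ := List.exists_cons_of_ne_nil hne
  have hJ := J _ hAlt g t rfl
  rcases hAlt.2 g List.mem_cons_self with hA | hB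
  · have := (hJ.1 hA).2
    rw [hprod1, one_smul] at this
    omega
  · rcases hJ.2 hB with ⟨h1, _⟩ | ⟨h1, _⟩
    · rw [hprod1, one_smul] at h1
      exact hvo.ne h1
    · rw [hprod1, one_smul] at h1
      omega

end Action

section GenAux
variable {ι : Type*} {T : SimpleGraph ι} {G : Type*} [Group G] [MulAction G ι]

lemma generation (htree : T.IsTree)
    (hact : ∀ (g : G) ⦃u w : ι⦄, T.Adj u w → T.Adj (g • u) (g • w))
    (htrans : ∀ ⦃u w u' w' : ι⦄, T.Adj u w → T.Adj u' w' →
      ∃ g : G, (g • u = u' ∧ g • w = w') ∨ (g • u = w' ∧ g • w = u'))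
    (hinv : ∃ (g : G) (u w : ι), T.Adj u w ∧ g • u = w ∧ g • w = u)
    {v o : ι} (hvo : T.Adj v o) (A B : Subgroup G)
    (hstab : ∀ g : G, g • v = v → g ∈ A)
    (hswap : ∃ s ∈ B, s • v = o ∧ s • o = v) :
    Subgroup.closure ((A : Set G) ∪ B) = ⊤ := by
  obtain ⟨s, hsB, hsv, hso⟩ := hswap
  have haveSwap : ∀ ⦃p q : ι⦄, T.Adj p q → ∃ s' : G, s' • p = q ∧ s' • q = p := by
    obtain ⟨g₀, u₀, w₀, h₀, hg1, hg2⟩ := hinv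
    intro p q hpq
    obtain ⟨k, hk⟩ := htrans hpq h₀
    rcases hk with ⟨hk1, hk2⟩ | ⟨hk1, hk2⟩
    · refine ⟨k⁻¹ * g₀ * k, ?_, ?_⟩
      · rw [mul_smul, mul_smul, hk1, hg1, inv_smul_eq_iff, hk2]
      · rw [mul_smul, mul_smul, hk2, hg2, inv_smul_eq_iff, hk1]
    · refine ⟨k⁻¹ * g₀ * k, ?_, ?_⟩
      · rw [mul_smul, mul_smul, hk1, hg2, inv_smul_eq_iff, hk2]
      · rw [mul_smul, mul_smul, hk2, hg1, inv_smul_eq_iff, hk1]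
  have hOT : ∀ ⦃x y x' y' : ι⦄, T.Adj x y → T.Adj x' y' →
      ∃ g : G, g • x = x' ∧ g • y = y' := by
    intro x y x' y' h h'
    obtain ⟨g, hg⟩ := htrans h h'
    rcases hg with ⟨h1, h2⟩ | ⟨h1, h2⟩
    · exact ⟨g, h1, h2⟩
    · obtain ⟨s', hs1, hs2⟩ := haveSwap h'
      exact ⟨s' * g, by rw [mul_smul, h1, hs2], by rw [mul_smul, h2, hs1]⟩
  set H := Subgroup.closure ((A : Set G) ∪ B) with hH
  have hAH : ∀ g ∈ A, g ∈ H := fun g hg => Subgroup.subset_closure (Set.mem_union_left _ hg)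
  have hsH : s ∈ H := Subgroup.subset_closure (Set.mem_union_right _ hsB)
  have hfixv : ∀ g : G, g • v = v → g ∈ H := fun g hg => hAH g (hstab g hg)
  have hfixo : ∀ g : G, g • o = o → g ∈ H := by
    intro g hg
    have hv' : (s⁻¹ * g * s) • v = v := by
      rw [mul_smul, mul_smul, hsv, hg, inv_smul_eq_iff, hsv]
    have hm := hfixv _ hv'
    have hgeq : g = s * (s⁻¹ * g * s) * s⁻¹ := by group
    rw [hgeq]; exact mul_mem (mul_mem hsH hm) (inv_mem hsH)
  have hEPstep : ∀ ⦃x y z : ι⦄, T.Adj y z → (∃ h ∈ H, h • v = x ∧ h • o = y) →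
      (∃ h ∈ H, h • v = y ∧ h • o = z) := by
    rintro x y z hyz ⟨h, hhH, hhv, hho⟩
    have hz' : T.Adj o (h⁻¹ • z) := by
      have := hact h⁻¹ hyz
      rwa [← hho, inv_smul_smul] at this
    obtain ⟨g₁, hg1, hg2⟩ := hOT hvo.symm hz'
    have hg₁H : g₁ ∈ H := hfixo g₁ hg1
    refine ⟨h * (g₁ * s), mul_mem hhH (mul_mem hg₁H hsH), ?_, ?_⟩
    · rw [mul_smul, mul_smul, hsv, hg1, hho]
    · rw [mul_smul, mul_smul, hso, hg2, smul_inv_smul]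
  have hP : ∀ x z : ι, T.Adj x z → ∃ h ∈ H, h • v = x ∧ h • o = z := by
    have hPv : ∀ z, T.Adj v z → ∃ h ∈ H, h • v = v ∧ h • o = z := by
      intro z hz
      by_cases hzo : z = o
      · subst hzo; exact ⟨1, one_mem _, one_smul _ _, one_smul _ _⟩
      · exact hEPstep hz ⟨s, hsH, hsv, hso⟩
    have hclosed : ∀ x y, T.Adj x y →
        (∀ z, T.Adj x z → ∃ h ∈ H, h • v = x ∧ h • o = z) →
        (∀ z, T.Adj y z → ∃ h ∈ H, h • v = y ∧ h • o = z) := by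
      intro x y hxy hx z hz
      exact hEPstep hz (hx y hxy)
    have hwalk : ∀ (x y : ι) (p : T.Walk x y),
        (∀ z, T.Adj x z → ∃ h ∈ H, h • v = x ∧ h • o = z) →
        (∀ z, T.Adj y z → ∃ h ∈ H, h • v = y ∧ h • o = z) := by
      intro x y p
      induction p with
      | nil => exact id
      | cons hadj q ihq => intro hx; exact ihq (hclosed _ _ hadj hx)
    intro x
    obtain ⟨p⟩ := htree.isConnected.preconnected v x
    exact hwalk v x p hPv
  rw [Subgroup.eq_top_iff']
  intro g
  obtain ⟨h, hhH, h1, h2⟩ := hP (g • v) (g • o) (hact g hvo)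
  have hfix : (h⁻¹ * g) • v = v := by rw [mul_smul, ← h1, inv_smul_smul]
  have hmem : h⁻¹ * g ∈ H := hfixv _ hfix
  have hg : g = h * (h⁻¹ * g) := by group
  rw [hg]; exact mul_mem hhH hmem


end GenAux

section AlgAux
variable {G : Type*} [Group G]

def NormalForm {Q : Type*} [Monoid Q] (A B : Subgroup G) (e : G → Q) (x : Q) : Prop :=
  (∃ g, (g ∈ A ∧ g ∈ B) ∧ x = e g) ∨
  (∃ l : List G, l ≠ [] ∧ AltList A B l ∧ x = (l.map e).prod)

lemma normalForm_step {Q : Type*} [Monoid Q] (A B : Subgroup G) (e : G → Q)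
    (hmulA : ∀ g h : G, g ∈ A → h ∈ A → e g * e h = e (g * h))
    (hmulB : ∀ g h : G, g ∈ B → h ∈ B → e g * e h = e (g * h))
    (g : G) (hg : g ∈ A ∨ g ∈ B) (x : Q) (hx : NormalForm A B e x) :
    NormalForm A B e (e g * x) := by
  classical
  rcases hx with ⟨c, ⟨hcA, hcB⟩, rfl⟩ | ⟨l, hlne, ⟨hch, hmem⟩, rfl⟩
  · -- x = e c with c ∈ A ⊓ B
    rcases hg with hgA | hgB
    · rw [hmulA g c hgA hcA]
      by_cases hB2 : g * c ∈ B
      · exact Or.inl ⟨g * c, ⟨mul_mem hgA hcA, hB2⟩, rfl⟩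
      · refine Or.inr ⟨[g * c], by simp, ⟨List.isChain_singleton _, ?_⟩, by simp⟩
        intro x hx
        rw [List.mem_singleton] at hx
        subst hx
        exact Or.inl ⟨mul_mem hgA hcA, hB2⟩
    · rw [hmulB g c hgB hcB]
      by_cases hA2 : g * c ∈ A
      · exact Or.inl ⟨g * c, ⟨hA2, mul_mem hgB hcB⟩, rfl⟩
      · refine Or.inr ⟨[g * c], by simp, ⟨List.isChain_singleton _, ?_⟩, by simp⟩
        intro x hx
        rw [List.mem_singleton] at hx
        subst hx
        exact Or.inr ⟨mul_mem hgB hcB, hA2⟩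
  · obtain ⟨h, t, rfl⟩ := List.exists_cons_of_ne_nil hlne
    have hhd := hmem h List.mem_cons_self
    rw [List.map_cons, List.prod_cons]
    rcases hg with hgA | hgB
    · rcases hhd with ⟨hhA, hhB⟩ | ⟨hhB, hhA⟩
      · -- g ∈ A, h ∈ A \ B : merge
        rw [← mul_assoc, hmulA g h hgA hhA]
        by_cases hg'B : g * h ∈ B
        · -- merged letter lies in A ⊓ B
          cases t with
          | nil => exact Or.inl ⟨g * h, ⟨mul_mem hgA hhA, hg'B⟩, by simp⟩
          | cons h₂ t₂ =>
            have hrel12 : AltRel A B h h₂ := (List.isChain_cons_cons.mp hch).1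
            have hh₂ : h₂ ∈ B ∧ h₂ ∉ A := by
              rcases hrel12 with ⟨_, _, h3, h4⟩ | ⟨h1, _, _, _⟩
              · exact ⟨h3, h4⟩
              · exact absurd h1 hhB
            rw [List.map_cons, List.prod_cons, ← mul_assoc,
              hmulB (g * h) h₂ hg'B hh₂.1]
            have hnew : (g * h) * h₂ ∈ B ∧ (g * h) * h₂ ∉ A := by
              constructor
              · exact mul_mem hg'B hh₂.1
              · intro hmA
                exact hh₂.2 (by
                  have : h₂ = (g * h)⁻¹ * ((g * h) * h₂) := by group
                  rw [this]
                  exact mul_mem (inv_mem (mul_mem hgA hhA)) hmA)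
            refine Or.inr ⟨((g * h) * h₂) :: t₂, by simp, ⟨?_, ?_⟩, by simp⟩
            · cases t₂ with
              | nil => exact List.isChain_singleton _
              | cons h₃ t₃ =>
                have hch' := List.isChain_cons_cons.mp ((List.isChain_cons_cons.mp hch).2)
                have hrel23 : AltRel A B h₂ h₃ := hch'.1
                have hh₃ : h₃ ∈ A ∧ h₃ ∉ B := by
                  rcases hrel23 with ⟨h1, _, _, _⟩ | ⟨_, _, h3, h4⟩
                  · exact absurd h1 hh₂.2
                  · exact ⟨h3, h4⟩
                exact List.isChain_cons_cons.mpr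
                  ⟨Or.inr ⟨hnew.1, hnew.2, hh₃.1, hh₃.2⟩, hch'.2⟩
            · intro x hx
              rcases List.mem_cons.mp hx with rfl | hx
              · exact Or.inr hnew
              · exact hmem x (List.mem_cons_of_mem _ (List.mem_cons_of_mem _ hx))
        · -- merged letter in A \ B
          refine Or.inr ⟨(g * h) :: t, by simp, ⟨?_, ?_⟩, by simp⟩
          · cases t with
            | nil => exact List.isChain_singleton _
            | cons h₂ t₂ =>
              have hch' := List.isChain_cons_cons.mp hch
              have hh₂ : h₂ ∈ B ∧ h₂ ∉ A := by
                rcases hch'.1 with ⟨_, _, h3, h4⟩ | ⟨h1, _, _, _⟩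
                · exact ⟨h3, h4⟩
                · exact absurd h1 hhB
              exact List.isChain_cons_cons.mpr
                ⟨Or.inl ⟨mul_mem hgA hhA, hg'B, hh₂.1, hh₂.2⟩, hch'.2⟩
          · intro x hx
            rcases List.mem_cons.mp hx with rfl | hx
            · exact Or.inl ⟨mul_mem hgA hhA, hg'B⟩
            · exact hmem x (List.mem_cons_of_mem _ hx)
      · -- g ∈ A, h ∈ B \ A
        by_cases hgB2 : g ∈ B
        · rw [← mul_assoc, hmulB g h hgB2 hhB]
          have hnew : g * h ∈ B ∧ g * h ∉ A := by
            refine ⟨mul_mem hgB2 hhB, ?_⟩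
            intro hmA
            exact hhA (by
              have : h = g⁻¹ * (g * h) := by group
              rw [this]
              exact mul_mem (inv_mem hgA) hmA)
          refine Or.inr ⟨(g * h) :: t, by simp, ⟨?_, ?_⟩, by simp⟩
          · cases t with
            | nil => exact List.isChain_singleton _
            | cons h₂ t₂ =>
              have hch' := List.isChain_cons_cons.mp hch
              have hh₂ : h₂ ∈ A ∧ h₂ ∉ B := by
                rcases hch'.1 with ⟨h1, _, _, _⟩ | ⟨_, _, h3, h4⟩
                · exact absurd h1 hhA
                · exact ⟨h3, h4⟩
              exact List.isChain_cons_cons.mpr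
                ⟨Or.inr ⟨hnew.1, hnew.2, hh₂.1, hh₂.2⟩, hch'.2⟩
          · intro x hx
            rcases List.mem_cons.mp hx with rfl | hx
            · exact Or.inr hnew
            · exact hmem x (List.mem_cons_of_mem _ hx)
        · -- new letter g in front
          refine Or.inr ⟨g :: h :: t, by simp, ⟨?_, ?_⟩, by simp⟩
          · exact List.isChain_cons_cons.mpr ⟨Or.inl ⟨hgA, hgB2, hhB, hhA⟩, hch⟩
          · intro x hx
            rcases List.mem_cons.mp hx with rfl | hx
            · exact Or.inl ⟨hgA, hgB2⟩
            · exact hmem x hx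
    · rcases hhd with ⟨hhA, hhB⟩ | ⟨hhB, hhA⟩
      · -- g ∈ B, h ∈ A \ B
        by_cases hgA2 : g ∈ A
        · rw [← mul_assoc, hmulA g h hgA2 hhA]
          have hnew : g * h ∈ A ∧ g * h ∉ B := by
            refine ⟨mul_mem hgA2 hhA, ?_⟩
            intro hmB
            exact hhB (by
              have : h = g⁻¹ * (g * h) := by group
              rw [this]
              exact mul_mem (inv_mem hgB) hmB)
          refine Or.inr ⟨(g * h) :: t, by simp, ⟨?_, ?_⟩, by simp⟩
          · cases t with
            | nil => exact List.isChain_singleton _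
            | cons h₂ t₂ =>
              have hch' := List.isChain_cons_cons.mp hch
              have hh₂ : h₂ ∈ B ∧ h₂ ∉ A := by
                rcases hch'.1 with ⟨_, _, h3, h4⟩ | ⟨h1, _, _, _⟩
                · exact ⟨h3, h4⟩
                · exact absurd h1 hhB
              exact List.isChain_cons_cons.mpr
                ⟨Or.inl ⟨hnew.1, hnew.2, hh₂.1, hh₂.2⟩, hch'.2⟩
          · intro x hx
            rcases List.mem_cons.mp hx with rfl | hx
            · exact Or.inl hnew
            · exact hmem x (List.mem_cons_of_mem _ hx)
        · refine Or.inr ⟨g :: h :: t, by simp, ⟨?_, ?_⟩, by simp⟩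
          · exact List.isChain_cons_cons.mpr ⟨Or.inr ⟨hgB, hgA2, hhA, hhB⟩, hch⟩
          · intro x hx
            rcases List.mem_cons.mp hx with rfl | hx
            · exact Or.inr ⟨hgB, hgA2⟩
            · exact hmem x hx
      · -- g ∈ B, h ∈ B \ A : merge
        rw [← mul_assoc, hmulB g h hgB hhB]
        by_cases hg'A : g * h ∈ A
        · cases t with
          | nil => exact Or.inl ⟨g * h, ⟨hg'A, mul_mem hgB hhB⟩, by simp⟩
          | cons h₂ t₂ =>
            have hrel12 : AltRel A B h h₂ := (List.isChain_cons_cons.mp hch).1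
            have hh₂ : h₂ ∈ A ∧ h₂ ∉ B := by
              rcases hrel12 with ⟨h1, _, _, _⟩ | ⟨_, _, h3, h4⟩
              · exact absurd h1 hhA
              · exact ⟨h3, h4⟩
            rw [List.map_cons, List.prod_cons, ← mul_assoc,
              hmulA (g * h) h₂ hg'A hh₂.1]
            have hnew : (g * h) * h₂ ∈ A ∧ (g * h) * h₂ ∉ B := by
              constructor
              · exact mul_mem hg'A hh₂.1
              · intro hmB
                exact hh₂.2 (by
                  have : h₂ = (g * h)⁻¹ * ((g * h) * h₂) := by group
                  rw [this]
                  exact mul_mem (inv_mem (mul_mem hgB hhB)) hmB)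
            refine Or.inr ⟨((g * h) * h₂) :: t₂, by simp, ⟨?_, ?_⟩, by simp⟩
            · cases t₂ with
              | nil => exact List.isChain_singleton _
              | cons h₃ t₃ =>
                have hch' := List.isChain_cons_cons.mp ((List.isChain_cons_cons.mp hch).2)
                have hrel23 : AltRel A B h₂ h₃ := hch'.1
                have hh₃ : h₃ ∈ B ∧ h₃ ∉ A := by
                  rcases hrel23 with ⟨_, _, h3, h4⟩ | ⟨h1, _, _, _⟩
                  · exact ⟨h3, h4⟩
                  · exact absurd h1 hh₂.2
                exact List.isChain_cons_cons.mpr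
                  ⟨Or.inl ⟨hnew.1, hnew.2, hh₃.1, hh₃.2⟩, hch'.2⟩
            · intro x hx
              rcases List.mem_cons.mp hx with rfl | hx
              · exact Or.inl hnew
              · exact hmem x (List.mem_cons_of_mem _ (List.mem_cons_of_mem _ hx))
        · refine Or.inr ⟨(g * h) :: t, by simp, ⟨?_, ?_⟩, by simp⟩
          · cases t with
            | nil => exact List.isChain_singleton _
            | cons h₂ t₂ =>
              have hch' := List.isChain_cons_cons.mp hch
              have hh₂ : h₂ ∈ A ∧ h₂ ∉ B := by
                rcases hch'.1 with ⟨h1, _, _, _⟩ | ⟨_, _, h3, h4⟩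
                · exact absurd h1 hhA
                · exact ⟨h3, h4⟩
              exact List.isChain_cons_cons.mpr
                ⟨Or.inr ⟨mul_mem hgB hhB, hg'A, hh₂.1, hh₂.2⟩, hch'.2⟩
          · intro x hx
            rcases List.mem_cons.mp hx with rfl | hx
            · exact Or.inr ⟨mul_mem hgB hhB, hg'A⟩
            · exact hmem x (List.mem_cons_of_mem _ hx)

theorem amalg_bijective (A B : Subgroup G)
    (hgen : Subgroup.closure ((A : Set G) ∪ B) = ⊤)
    (hne1 : ∀ l : List G, AltList A B l → l ≠ [] → l.prod ≠ 1) :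
    Function.Bijective
      (amalgLift
        (Subgroup.inclusion (inf_le_left : A ⊓ B ≤ A))
        (Subgroup.inclusion (inf_le_right : A ⊓ B ≤ B))
        A.subtype B.subtype (fun _ => rfl)) := by
  classical
  set f₁ : ↥(A ⊓ B) →* ↥A := Subgroup.inclusion inf_le_left with hf₁
  set f₂ : ↥(A ⊓ B) →* ↥B := Subgroup.inclusion inf_le_right with hf₂
  set φ : AmalgamatedProduct f₁ f₂ →* G :=
    amalgLift f₁ f₂ A.subtype B.subtype (fun _ => rfl) with hφdef
  show Function.Bijective φ
  have hmk : Function.Surjective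
      (QuotientGroup.mk : Monoid.Coprod ↥A ↥B → AmalgamatedProduct f₁ f₂) :=
    QuotientGroup.mk'_surjective _
  set ja : ↥A →* AmalgamatedProduct f₁ f₂ :=
    (QuotientGroup.mk' _).comp Monoid.Coprod.inl with hja
  set jb : ↥B →* AmalgamatedProduct f₁ f₂ :=
    (QuotientGroup.mk' _).comp Monoid.Coprod.inr with hjb
  have hφja : ∀ a : ↥A, φ (ja a) = (a : G) := by
    intro a
    show QuotientGroup.lift _ (Monoid.Coprod.lift A.subtype B.subtype) _
      (QuotientGroup.mk (Monoid.Coprod.inl a)) = (a : G)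
    rw [QuotientGroup.lift_mk, Monoid.Coprod.lift_apply_inl]
    rfl
  have hφjb : ∀ b : ↥B, φ (jb b) = (b : G) := by
    intro b
    show QuotientGroup.lift _ (Monoid.Coprod.lift A.subtype B.subtype) _
      (QuotientGroup.mk (Monoid.Coprod.inr b)) = (b : G)
    rw [QuotientGroup.lift_mk, Monoid.Coprod.lift_apply_inr]
    rfl
  have hrel : ∀ (g : G) (hA : g ∈ A) (hB : g ∈ B), ja ⟨g, hA⟩ = jb ⟨g, hB⟩ := by
    intro g hA hB
    have hr : Monoid.Coprod.inl (f₁ ⟨g, ⟨hA, hB⟩⟩) *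
        (Monoid.Coprod.inr (f₂ ⟨g, ⟨hA, hB⟩⟩))⁻¹ ∈ AmalgRels f₁ f₂ :=
      ⟨⟨g, ⟨hA, hB⟩⟩, rfl⟩
    have hN := Subgroup.subset_normalClosure hr
    have hNormal : (Subgroup.normalClosure (AmalgRels f₁ f₂)).Normal :=
      Subgroup.normalClosure_normal
    show (QuotientGroup.mk (Monoid.Coprod.inl ⟨g, hA⟩) : AmalgamatedProduct f₁ f₂)
      = QuotientGroup.mk (Monoid.Coprod.inr ⟨g, hB⟩)
    rw [QuotientGroup.eq]
    have h2 := hNormal.conj_mem _ (inv_mem hN) (Monoid.Coprod.inr (f₂ ⟨g, ⟨hA, hB⟩⟩))⁻¹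
    have hfeq1 : f₁ ⟨g, ⟨hA, hB⟩⟩ = (⟨g, hA⟩ : ↥A) := rfl
    have hfeq2 : f₂ ⟨g, ⟨hA, hB⟩⟩ = (⟨g, hB⟩ : ↥B) := rfl
    rw [hfeq1, hfeq2] at h2
    convert h2 using 1
    group
  set e : G → AmalgamatedProduct f₁ f₂ := fun g =>
    if h : g ∈ A then ja ⟨g, h⟩ else if h' : g ∈ B then jb ⟨g, h'⟩ else 1 with he
  have heA : ∀ (g : G) (h : g ∈ A), e g = ja ⟨g, h⟩ := fun g h => dif_pos h
  have heB : ∀ (g : G) (h : g ∈ B), e g = jb ⟨g, h⟩ := by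
    intro g h
    by_cases hA : g ∈ A
    · rw [heA g hA]; exact hrel g hA h
    · show (if h : g ∈ A then _ else _) = _
      rw [dif_neg hA, dif_pos h]
  have hmulA : ∀ g h : G, g ∈ A → h ∈ A → e g * e h = e (g * h) := by
    intro g h hg hh
    rw [heA g hg, heA h hh, heA _ (mul_mem hg hh), ← map_mul]
    rfl
  have hmulB : ∀ g h : G, g ∈ B → h ∈ B → e g * e h = e (g * h) := by
    intro g h hg hh
    rw [heB g hg, heB h hh, heB _ (mul_mem hg hh), ← map_mul]
    rfl
  have hφe : ∀ g : G, (g ∈ A ∨ g ∈ B) → φ (e g) = g := by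
    rintro g (h | h)
    · rw [heA g h, hφja]
    · rw [heB g h, hφjb]
  have hNF : ∀ x : AmalgamatedProduct f₁ f₂, NormalForm A B e x := by
    intro x
    obtain ⟨y, rfl⟩ := hmk x
    induction y using Monoid.Coprod.induction_on' with
    | one =>
      refine Or.inl ⟨1, ⟨one_mem _, one_mem _⟩, ?_⟩
      have h1 : e 1 = 1 := by rw [heA 1 (one_mem _)]; exact map_one ja
      rw [h1]
      exact map_one (QuotientGroup.mk' _)
    | inl_mul m y ih =>
      have : (QuotientGroup.mk (Monoid.Coprod.inl m * y) : AmalgamatedProduct f₁ f₂)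
          = e (m : G) * QuotientGroup.mk y := by
        rw [heA _ m.2]
        rfl
      rw [this]
      exact normalForm_step A B e hmulA hmulB _ (Or.inl m.2) _ ih
    | inr_mul n y ih =>
      have : (QuotientGroup.mk (Monoid.Coprod.inr n * y) : AmalgamatedProduct f₁ f₂)
          = e (n : G) * QuotientGroup.mk y := by
        rw [heB _ n.2]
        rfl
      rw [this]
      exact normalForm_step A B e hmulA hmulB _ (Or.inr n.2) _ ih
  constructor
  · -- injective
    rw [injective_iff_map_eq_one]
    intro x hx1
    rcases hNF x with ⟨g, ⟨hgA, hgB⟩, rfl⟩ | ⟨l, hlne, hAlt, rfl⟩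
    · have : g = 1 := by rw [← hφe g (Or.inl hgA), hx1]
      subst this
      rw [heA 1 (one_mem _)]
      exact map_one ja
    · exfalso
      have hprod : φ ((l.map e).prod) = l.prod := by
        rw [map_list_prod, List.map_map]
        congr 1
        have : ∀ g ∈ l, (φ ∘ e) g = id g := by
          intro g hg
          have := hAlt.2 g hg
          rcases this with ⟨h1, _⟩ | ⟨h1, _⟩
          · exact hφe g (Or.inl h1)
          · exact hφe g (Or.inr h1)
        rw [List.map_congr_left this, List.map_id]
      rw [hx1] at hprod
      exact hne1 l hAlt hlne hprod.symm
  · -- surjective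
    rw [← MonoidHom.range_eq_top]
    rw [eq_top_iff, ← hgen, Subgroup.closure_le]
    rintro g (hg | hg)
    · exact ⟨ja ⟨g, hg⟩, hφja _⟩
    · exact ⟨jb ⟨g, hg⟩, hφjb _⟩


end AlgAux
end TreeAux

section MainAux

variable {ι : Type*} {T : SimpleGraph ι} {G : Type*} [Group G] [MulAction G ι]

lemma edgeStab_pair_smul (g : G) (u w : ι) :
    g • ({u, w} : Set ι) = {g • u, g • w} := by
  rw [Set.smul_set_insert, Set.smul_set_singleton]

lemma mem_edgeStab_of_swap {g : G} {u w : ι} (h1 : g • u = w) (h2 : g • w = u) :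
    g ∈ edgeStab G u w := by
  show g • ({u, w} : Set ι) = {u, w}
  rw [edgeStab_pair_smul, h1, h2]
  exact Set.pair_comm w u

lemma mem_edgeStab_of_fix {g : G} {u w : ι} (h1 : g • u = u) (h2 : g • w = w) :
    g ∈ edgeStab G u w := by
  show g • ({u, w} : Set ι) = {u, w}
  rw [edgeStab_pair_smul, h1, h2]

lemma edgeStab_cases {g : G} {u w : ι} (hne : u ≠ w) (hg : g ∈ edgeStab G u w) :
    (g • u = u ∧ g • w = w) ∨ (g • u = w ∧ g • w = u) := by
  have hset : g • ({u, w} : Set ι) = {u, w} := hg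
  have h1 : g • u ∈ ({u, w} : Set ι) := by
    rw [← hset]
    exact Set.smul_mem_smul_set (Set.mem_insert _ _)
  have h2 : g • w ∈ ({u, w} : Set ι) := by
    rw [← hset]
    exact Set.smul_mem_smul_set (Set.mem_insert_of_mem _ rfl)
  rcases h1 with h1 | h1 <;> rcases h2 with h2 | h2
  · exact absurd (MulAction.injective g (h2.trans h1.symm)) (Ne.symm hne)
  · exact Or.inl ⟨h1, h2⟩
  · exact Or.inr ⟨h1, h2⟩
  · exact absurd (MulAction.injective g (h1.trans h2.symm)) hne

lemma exists_edge_swap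
    (htrans : ∀ ⦃u w u' w' : ι⦄, T.Adj u w → T.Adj u' w' →
      ∃ g : G, (g • u = u' ∧ g • w = w') ∨ (g • u = w' ∧ g • w = u'))
    (hinv : ∃ (g : G) (u w : ι), T.Adj u w ∧ g • u = w ∧ g • w = u)
    {u w : ι} (he : T.Adj u w) : ∃ s : G, s • u = w ∧ s • w = u := by
  obtain ⟨g₀, u₀, w₀, h₀, hg1, hg2⟩ := hinv
  obtain ⟨k, hk⟩ := htrans he h₀
  rcases hk with ⟨hk1, hk2⟩ | ⟨hk1, hk2⟩
  · exact ⟨k⁻¹ * g₀ * k,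
      by rw [mul_smul, mul_smul, hk1, hg1, inv_smul_eq_iff, hk2],
      by rw [mul_smul, mul_smul, hk2, hg2, inv_smul_eq_iff, hk1]⟩
  · exact ⟨k⁻¹ * g₀ * k,
      by rw [mul_smul, mul_smul, hk1, hg2, inv_smul_eq_iff, hk2],
      by rw [mul_smul, mul_smul, hk2, hg1, inv_smul_eq_iff, hk1]⟩

end MainAux

/-- If a group `G` acts on a tree `T` without vertices of degree `< 2`,
transitively on undirected edges, and some element inverts some edge, then for every
vertex `v` and incident edge `e = uw` the canonical homomorphism
`St_G(v) *_{St_G(v) ∩ St_G(e)} St_G(e) →* G` is an isomorphism. -/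
theorem stmt_1 {G ι : Type*} [Group G] [MulAction G ι] (T : SimpleGraph ι)
    (htree : T.IsTree)
    (hact : ∀ (g : G) ⦃u w : ι⦄, T.Adj u w → T.Adj (g • u) (g • w))
    (hdeg : ∀ x : ι, 2 ≤ (T.neighborSet x).encard)
    (htrans : ∀ ⦃u w u' w' : ι⦄, T.Adj u w → T.Adj u' w' →
      ∃ g : G, (g • u = u' ∧ g • w = w') ∨ (g • u = w' ∧ g • w = u'))
    (hinv : ∃ (g : G) (u w : ι), T.Adj u w ∧ g • u = w ∧ g • w = u)
    (v u w : ι) (he : T.Adj u w) (hv : v = u ∨ v = w) :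
    Function.Bijective
      (amalgLift
        (Subgroup.inclusion
          (inf_le_left : MulAction.stabilizer G v ⊓ edgeStab G u w ≤ _))
        (Subgroup.inclusion
          (inf_le_right : MulAction.stabilizer G v ⊓ edgeStab G u w ≤ _))
        (MulAction.stabilizer G v).subtype (edgeStab G u w).subtype
        (fun _ => rfl)) := by
  classical
  obtain ⟨s, hsu, hsw⟩ := exists_edge_swap (T := T) htrans hinv he
  have hsB : s ∈ edgeStab G u w := mem_edgeStab_of_swap hsu hsw
  have hne : u ≠ w := he.ne
  rcases hv with rfl | rfl
  · -- v = u
    apply amalg_bijective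
    · refine generation htree hact htrans hinv he _ _ ?_ ?_
      · exact fun g hg => MulAction.mem_stabilizer_iff.mpr hg
      · exact ⟨s, hsB, hsu, hsw⟩
    · refine pingpong htree hact he _ _ ?_ ?_ ?_
      · exact fun a ha => MulAction.mem_stabilizer_iff.mp ha
      · intro a haA haB hcon
        exact haB (mem_edgeStab_of_fix (MulAction.mem_stabilizer_iff.mp haA) hcon)
      · intro b hbB hbA
        rcases edgeStab_cases hne hbB with ⟨h1, h2⟩ | ⟨h1, h2⟩
        · exact absurd (MulAction.mem_stabilizer_iff.mpr h1) hbA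
        · exact ⟨h1, h2⟩
  · -- v = w
    apply amalg_bijective
    · refine generation htree hact htrans hinv he.symm _ _ ?_ ?_
      · exact fun g hg => MulAction.mem_stabilizer_iff.mpr hg
      · exact ⟨s, hsB, hsw, hsu⟩
    · refine pingpong htree hact he.symm _ _ ?_ ?_ ?_
      · exact fun a ha => MulAction.mem_stabilizer_iff.mp ha
      · intro a haA haB hcon
        exact haB (mem_edgeStab_of_fix hcon (MulAction.mem_stabilizer_iff.mp haA))
      · intro b hbB hbA
        rcases edgeStab_cases hne hbB with ⟨h1, h2⟩ | ⟨h1, h2⟩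
        · exact absurd (MulAction.mem_stabilizer_iff.mpr h2) hbA
        · exact ⟨h2, h1⟩

end CayleyConn2
end

section
/- Under the standing setup, for every adhesion set {x,y} of (T,𝒱) one has (x·y⁻¹)² = 1 in G; equivalently, the element x·y⁻¹ is an involution of G. -/
open SimpleGraph Set Pointwise

namespace CayleyConn2

/-! The element `g` carrying the separation `(W_{t∖t'}, W_{t'∖t})` to its inverse
`(W_{t'∖t}, W_{t∖t'})` maps the separator, which is the adhesion set `{x, y}`, onto itself.
It is not the identity because tightness makes `W_{t∖t'} ≠ W_{t'∖t}`, so, acting freely,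
it swaps `x` and `y`: then `g = x * y⁻¹`, and `g²` fixes `x`, hence `g² = 1`. -/

lemma _root_.SimpleGraph.IsAcyclic.mem_edges_of_adj {ι : Type*} {T : SimpleGraph ι}
    (hT : T.IsAcyclic) {t t' : ι} (h : T.Adj t t') (p : T.Walk t t') : s(t, t') ∈ p.edges :=
  isBridge_iff_forall_walk_mem_edges.mp (isAcyclic_iff_forall_adj_isBridge.mp hT h) p

lemma sideNodes_disjoint {ι : Type*} {T : SimpleGraph ι} (hT : T.IsAcyclic) {t t' : ι}
    (h : T.Adj t t') : Disjoint (sideNodes T t t') (sideNodes T t' t) := by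
  refine Set.disjoint_left.mpr fun s ⟨p, hp⟩ ⟨q, hq⟩ => ?_
  have hm := hT.mem_edges_of_adj h (p.append q.reverse)
  rw [Walk.edges_append, List.mem_append, Walk.edges_reverse, List.mem_reverse] at hm
  exact hm.elim hp fun hm => hq (Sym2.eq_swap ▸ hm)

lemma mem_sideNodes_self {ι : Type*} (T : SimpleGraph ι) (t t' : ι) :
    t ∈ sideNodes T t t' :=
  ⟨Walk.nil, by simp⟩

lemma TreeDecomp.W_inter_W {ι V : Type*} {T : SimpleGraph ι} {Γ : SimpleGraph V}
    (D : TreeDecomp T Γ) (hT : T.IsTree) {t t' : ι} (h : T.Adj t t') :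
    D.W t t' ∩ D.W t' t = D.part t ∩ D.part t' := by
  classical
  refine Set.Subset.antisymm ?_ fun v ⟨hvt, hvt'⟩ =>
    ⟨Set.mem_biUnion (mem_sideNodes_self T t t') hvt,
      Set.mem_biUnion (mem_sideNodes_self T t' t) hvt'⟩
  rintro v ⟨hv, hv'⟩
  simp only [TreeDecomp.W, Set.mem_iUnion] at hv hv'
  obtain ⟨s, ⟨q, hq⟩, hvs⟩ := hv
  obtain ⟨s', hs', hvs'⟩ := hv'
  obtain ⟨w⟩ := hT.connected.preconnected s s'
  have hp : w.bypass.IsPath := w.bypass_isPath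
  -- the path from `s` to `s'` crosses the edge `tt'`, since `s'` is not on the side of `t`
  have he : s(t, t') ∈ w.bypass.edges := by
    by_contra he
    refine Set.disjoint_left.mp (sideNodes_disjoint hT.isAcyclic h) ⟨q.append w.bypass, ?_⟩ hs'
    rw [Walk.edges_append, List.mem_append]
    exact fun hm => hm.elim hq he
  exact ⟨D.path_inter _ hp (w.bypass.fst_mem_support_of_mem_edges he) ⟨hvs, hvs'⟩,
    D.path_inter _ hp (w.bypass.snd_mem_support_of_mem_edges he) ⟨hvs, hvs'⟩⟩

lemma mul_inv_sq_eq_one_of_image_pair {G : Type*} [Group G] {g x y : G} (hg : g ≠ 1)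
    (h : (g * ·) '' {x, y} = ({x, y} : Set G)) : (x * y⁻¹) ^ 2 = 1 := by
  have hmem : ∀ z ∈ ({x, y} : Set G), g * z ∈ ({x, y} : Set G) :=
    fun z hz => h ▸ Set.mem_image_of_mem _ hz
  have hgx : g * x = y :=
    (hmem x (by simp)).resolve_left fun hx => hg (mul_eq_right.mp hx)
  have hgy : g * y = x :=
    (hmem y (by simp)).resolve_right fun hy => hg (mul_eq_right.mp hy)
  have hg_eq : x * y⁻¹ = g := (eq_mul_inv_iff_mul_eq.mpr hgy).symm
  rw [hg_eq, sq]
  exact mul_eq_right.mp (by rw [mul_assoc, hgx, hgy])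

theorem stmt_7_general {G ι : Type*} [Group G] (S : Set G) (T : SimpleGraph ι)
    (D : TreeDecomp T (cayley G S)) (hst : Standing G S T D)
    (t t' : ι) (h : T.Adj t t') (x y : G)
    (hadh : D.part t ∩ D.part t' = {x, y}) :
    (x * y⁻¹) ^ 2 = 1 := by
  obtain ⟨g, hgA, hgB⟩ := hst.sep_trans h h.symm
  have hsep : D.W t t' ∩ D.W t' t = {x, y} := (D.W_inter_W hst.tree h).trans hadh
  have hg : g ≠ 1 := by
    rintro rfl
    obtain ⟨v, hv, -⟩ := (hst.ind_tight h).1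
    simp only [one_mul, Set.image_id'] at hgA
    exact hv.2 (hgA ▸ hv.1)
  refine mul_inv_sq_eq_one_of_image_pair hg ?_
  rw [← hsep, Set.image_inter (mul_right_injective g), hgA, hgB, Set.inter_comm]

/-- For every adhesion set `{x, y}` the element `x * y⁻¹` squares to
the identity. -/
theorem stmt_7 {G ι : Type*} [Group G] (S : Set G) (T : SimpleGraph ι)
    (D : TreeDecomp T (cayley G S)) (hst : Standing G S T D)
    (t t' : ι) (h : T.Adj t t') (x y : G) (hxy : x ≠ y)
    (hadh : D.part t ∩ D.part t' = {x, y}) :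
    (x * y⁻¹) ^ 2 = 1 :=
  stmt_7_general S T D hst t t' h x y hadh

end CayleyConn2
end

section
/- Under the standing setup, for every edge tt' of T, the setwise stabilizer in G of the adhesion set V_t ∩ V_{t'} under the left-multiplication action is a subgroup of order exactly two; in particular it is isomorphic to Z_2. -/
open SimpleGraph Set Pointwise

namespace CayleyConn2

lemma edge_mem_of_walk {ι : Type*} {T : SimpleGraph ι} (hT : T.IsTree) {t t' s s' : ι}
    (h : T.Adj t t') (hs : s ∈ sideNodes T t t') (hs' : s' ∈ sideNodes T t' t)
    (W : T.Walk s s') : s(t, t') ∈ W.edges := by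
  haveI := Classical.decEq ι
  by_contra hW
  obtain ⟨p, hp⟩ := hs
  obtain ⟨q, hq⟩ := hs'
  set R : T.Walk t t' := (p.append W).append q.reverse with hR
  have hRe : s(t, t') ∉ R.edges := by
    rw [hR]
    simp only [SimpleGraph.Walk.edges_append, SimpleGraph.Walk.edges_reverse,
      List.mem_append, List.mem_reverse]
    rintro ((h1 | h2) | h3)
    · exact hp h1
    · exact hW h2
    · exact hq (by rwa [Sym2.eq_swap])
  have hP1 : (SimpleGraph.Walk.cons h .nil : T.Walk t t').IsPath := by
    simp [h.ne]
  have := hT.IsAcyclic.path_unique ⟨_, hP1⟩ R.toPath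
  have hmem : s(t, t') ∈ (SimpleGraph.Walk.cons h (.nil) : T.Walk t t').edges := by simp
  rw [show (SimpleGraph.Walk.cons h (.nil) : T.Walk t t') = (R.toPath : T.Walk t t') from
    congrArg Subtype.val this] at hmem
  exact hRe (R.edges_toPath_subset hmem)

lemma W_inter {G ι : Type*} [Group G] {S : Set G} {T : SimpleGraph ι}
    {D : TreeDecomp T (cayley G S)} (hT : T.IsTree) {t t' : ι} (h : T.Adj t t') :
    D.W t t' ∩ D.W t' t = D.part t ∩ D.part t' := by
  apply Set.Subset.antisymm
  · rintro v ⟨hv1, hv2⟩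
    simp only [TreeDecomp.W, Set.mem_iUnion] at hv1 hv2
    obtain ⟨s, hs, hvs⟩ := hv1
    obtain ⟨s', hs', hvs'⟩ := hv2
    obtain ⟨Wk⟩ := hT.isConnected.preconnected s s'
    haveI := Classical.decEq ι
    have hedge := edge_mem_of_walk hT h hs hs' Wk.toPath
    have ht : t ∈ (Wk.toPath : T.Walk s s').support :=
      SimpleGraph.Walk.fst_mem_support_of_mem_edges _ hedge
    have ht' : t' ∈ (Wk.toPath : T.Walk s s').support :=
      SimpleGraph.Walk.snd_mem_support_of_mem_edges _ hedge
    exact ⟨D.path_inter _ Wk.toPath.2 ht ⟨hvs, hvs'⟩,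
      D.path_inter _ Wk.toPath.2 ht' ⟨hvs, hvs'⟩⟩
  · rintro v ⟨hv1, hv2⟩
    exact ⟨Set.mem_biUnion (mem_sideNodes_self T t t') hv1,
      Set.mem_biUnion (mem_sideNodes_self T t' t) hv2⟩

/-- The setwise stabilizer of every adhesion set under the
left-multiplication action has order exactly two, hence is isomorphic to `Z_2`. -/
theorem stmt_8 {G ι : Type*} [Group G] (S : Set G) (T : SimpleGraph ι)
    (D : TreeDecomp T (cayley G S)) (hst : Standing G S T D)
    (t t' : ι) (h : T.Adj t t') :
    Nat.card (MulAction.stabilizer G (D.part t ∩ D.part t')) = 2 ∧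
    Nonempty (MulAction.stabilizer G (D.part t ∩ D.part t') ≃*
      Multiplicative (ZMod 2)) := by
  classical
  have hT := hst.tree
  have hWint := W_inter (D := D) hT h
  obtain ⟨x, y, hxy, hAdh⟩ := Set.encard_eq_two.mp (hst.adhesion_card h)
  obtain ⟨g, hg1, hg2⟩ := hst.sep_trans h h.symm
  have himg : ∀ (a : G) (s : Set G), (a * ·) '' s = a • s := fun a s => by
    ext z
    simp only [Set.mem_smul_set, Set.mem_image, smul_eq_mul]
  rw [himg] at hg1 hg2
  have hgAdh : g • (D.part t ∩ D.part t') = D.part t ∩ D.part t' := by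
    rw [← hWint, Set.smul_set_inter, hg1, hg2, Set.inter_comm]
  have hgstab : g ∈ MulAction.stabilizer G (D.part t ∩ D.part t') := hgAdh
  have hgne : g ≠ 1 := by
    rintro rfl
    obtain ⟨⟨v, hvside, _⟩, -⟩ := hst.ind_tight h
    rw [one_smul] at hg1
    rw [hg1] at hvside
    exact hvside.2 hvside.1
  have hstabx : ∀ k : G, k ∈ MulAction.stabilizer G (D.part t ∩ D.part t') →
      k * x ∈ ({x, y} : Set G) := by
    intro k hk
    have hxmem : x ∈ D.part t ∩ D.part t' := by rw [hAdh]; exact Set.mem_insert _ _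
    have := Set.smul_mem_smul_set (a := k) hxmem
    rw [MulAction.mem_stabilizer_iff.mp hk, hAdh] at this
    simpa [smul_eq_mul] using this
  have hgx : g * x = y := by
    rcases hstabx g hgstab with h1 | h2
    · exact absurd (mul_right_cancel (h1.trans (one_mul x).symm)) hgne
    · exact h2
  have hset : ((MulAction.stabilizer G (D.part t ∩ D.part t') : Subgroup G) : Set G)
      = {1, g} := by
    ext k
    simp only [SetLike.mem_coe, Set.mem_insert_iff, Set.mem_singleton_iff]
    constructor
    · intro hk
      rcases hstabx k hk with h1 | h2
      · exact Or.inl (mul_right_cancel (h1.trans (one_mul x).symm))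
      · exact Or.inr (mul_right_cancel (h2.trans hgx.symm))
    · rintro (rfl | rfl)
      · exact one_mem _
      · exact hgstab
  have hcard : Nat.card (MulAction.stabilizer G (D.part t ∩ D.part t')) = 2 := by
    have hc : Nat.card (MulAction.stabilizer G (D.part t ∩ D.part t'))
        = Nat.card ({1, g} : Set G) := Nat.card_congr (Equiv.setCongr hset)
    rw [hc, Nat.card_coe_set_eq, Set.ncard_pair (Ne.symm hgne)]
  have hzmod : Nat.card (Multiplicative (ZMod 2)) = 2 := by
    rw [Nat.card_congr Multiplicative.toAdd, Nat.card_zmod]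
  haveI : Fact (Nat.Prime 2) := ⟨Nat.prime_two⟩
  exact ⟨hcard, ⟨mulEquivOfPrimeCardEq hcard hzmod⟩⟩


end CayleyConn2
end

section
/- Let G be a group with a generating set S such that Γ = Cay(G,S) is cubic of connectivity two, and let 𝒩 be a set of pairwise nested tight separations of Γ that is invariant under the left-multiplication action of G (i.e. (gA,gB) ∈ 𝒩 whenever (A,B) ∈ 𝒩 and g ∈ G). Let (A,B) ∈ 𝒩 be a separation of Type II with A∩B = {x,y}, let P be a shortest path in Γ from x to y, which necessarily has length at least two, let v1, v2, v3 be three consecutive vertices on P, and let g ∈ G be such that g·v2 ∈ {x,y}. Then g·v1 and g·v3 lie in the same connected component of Γ − {x,y}. -/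
open SimpleGraph Set Pointwise

namespace CayleyConn2

/-! ### Auxiliary lemmas for Statement 13 -/

section Aux

variable {V : Type*} {Γ : SimpleGraph V}

lemma ReachIn.mono {s t : Set V} {u v : V} (h : ReachIn Γ s u v) (hst : s ⊆ t) :
    ReachIn Γ t u v := by
  obtain ⟨p, hp⟩ := h
  exact ⟨p, fun w hw => hst (hp w hw)⟩

protected lemma ReachIn.refl {s : Set V} {u : V} (h : u ∈ s) : ReachIn Γ s u u :=
  ⟨Walk.nil, by simpa using h⟩

protected lemma ReachIn.symm {s : Set V} {u v : V} (h : ReachIn Γ s u v) :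
    ReachIn Γ s v u := by
  obtain ⟨p, hp⟩ := h
  exact ⟨p.reverse, fun w hw => hp w (by simpa [Walk.support_reverse] using hw)⟩

protected lemma ReachIn.trans {s : Set V} {u v w : V} (h1 : ReachIn Γ s u v)
    (h2 : ReachIn Γ s v w) : ReachIn Γ s u w := by
  obtain ⟨p, hp⟩ := h1
  obtain ⟨q, hq⟩ := h2
  refine ⟨p.append q, fun a ha => ?_⟩
  rw [Walk.mem_support_append_iff] at ha
  exact ha.elim (hp a) (hq a)

lemma reachIn_of_adj {s : Set V} {u v : V} (h : Γ.Adj u v) (hu : u ∈ s) (hv : v ∈ s) :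
    ReachIn Γ s u v := by
  refine ⟨Walk.cons h Walk.nil, fun w hw => ?_⟩
  simp only [Walk.support_cons, Walk.support_nil, List.mem_cons,
    List.mem_singleton, List.not_mem_nil] at hw
  rcases hw with rfl | rfl | h'
  · exact hu
  · exact hv
  · exact absurd h' (by simp)

lemma getVert_mem_support {u v : V} (p : Γ.Walk u v) (k : ℕ) : p.getVert k ∈ p.support := by
  induction p generalizing k with
  | nil => cases k <;> simp [Walk.getVert]
  | cons h q ih =>
    cases k with
    | zero => simp [Walk.getVert_zero]
    | succ n =>
      rw [Walk.getVert_cons_succ]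
      simp only [Walk.support_cons, List.mem_cons]
      exact Or.inr (ih n)

lemma getVert_inj {u v : V} {p : Γ.Walk u v} (hp : p.IsPath) :
    ∀ j k : ℕ, j ≤ p.length → k ≤ p.length → p.getVert j = p.getVert k → j = k := by
  induction p with
  | nil => intro j k hj hk _; simp only [Walk.length_nil, Nat.le_zero] at hj hk; omega
  | @cons a b c h q ih =>
    rw [Walk.cons_isPath_iff] at hp
    intro j k hj hk heq
    rw [Walk.length_cons] at hj hk
    cases j with
    | zero =>
      cases k with
      | zero => rfl
      | succ k =>
        rw [Walk.getVert_zero, Walk.getVert_cons_succ] at heq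
        exact absurd (heq ▸ getVert_mem_support q k) hp.2
    | succ j =>
      cases k with
      | zero =>
        rw [Walk.getVert_zero, Walk.getVert_cons_succ] at heq
        exact absurd (heq ▸ getVert_mem_support q j) hp.2
      | succ k =>
        rw [Walk.getVert_cons_succ, Walk.getVert_cons_succ] at heq
        have := ih hp.1 j k (by omega) (by omega) heq
        omega

lemma reachIn_getVert {u v : V} (p : Γ.Walk u v) {n m : ℕ} (hnm : n ≤ m)
    (hm : m ≤ p.length) :
    ReachIn Γ {w | ∃ k, n ≤ k ∧ k ≤ m ∧ p.getVert k = w} (p.getVert n) (p.getVert m) := by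
  induction m, hnm using Nat.le_induction with
  | base => exact ReachIn.refl ⟨n, le_rfl, le_rfl, rfl⟩
  | succ m hnm ih =>
    have h1 := (ih (by omega)).mono
      (t := {w | ∃ k, n ≤ k ∧ k ≤ m + 1 ∧ p.getVert k = w}) (fun a ha => by
      simp only [Set.mem_setOf_eq] at ha ⊢
      obtain ⟨k, hk1, hk2, hk3⟩ := ha
      exact ⟨k, hk1, by omega, hk3⟩)
    exact h1.trans (reachIn_of_adj (p.adj_getVert_succ (by omega))
      ⟨m, hnm, by omega, rfl⟩ ⟨m + 1, by omega, le_rfl, rfl⟩)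

lemma tightSide_reach {X s : Set V} {Z : Set V} {a b p q : V}
    (htS : TightSide Γ X s) (hs : ∀ u ∈ s, u ∈ Zᶜ)
    (ha : a ∈ X) (hb : b ∈ X) (haZ : a ∈ Zᶜ) (hbZ : b ∈ Zᶜ)
    (h1 : ReachIn Γ Zᶜ p a) (h2 : ReachIn Γ Zᶜ b q) :
    ReachIn Γ Zᶜ p q := by
  classical
  obtain ⟨v₀, hv₀s, hv₀X, hcl, hnbr⟩ := htS
  have key : ∀ c, ReachAvoiding Γ X v₀ c → ReachIn Γ Zᶜ v₀ c := by
    rintro c ⟨r, hr⟩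
    refine ⟨r, fun u hu => ?_⟩
    exact hs u (hcl u ⟨r.takeUntil u hu,
      fun z hz => hr z (Walk.support_takeUntil_subset r hu hz)⟩)
  obtain ⟨c1, hc1r, hc1adj⟩ := hnbr a ha
  obtain ⟨c2, hc2r, hc2adj⟩ := hnbr b hb
  have e1 := reachIn_of_adj hc1adj haZ (hs _ (hcl _ hc1r))
  have e2 := reachIn_of_adj hc2adj.symm (hs _ (hcl _ hc2r)) hbZ
  exact h1.trans (e1.trans (((key c1 hc1r).symm.trans (key c2 hc2r)).trans (e2.trans h2)))

end Aux

lemma cayley_adj {G : Type*} [Group G] {S : Set G} {a b : G} :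
    (cayley G S).Adj a b ↔ a ≠ b ∧ (a⁻¹ * b ∈ S ∨ b⁻¹ * a ∈ S) :=
  SimpleGraph.fromRel_adj _ a b

/-- Left multiplication as a graph homomorphism of the Cayley graph. -/
def mulGHom (G : Type*) [Group G] (S : Set G) (g : G) : cayley G S →g cayley G S where
  toFun := (g * ·)
  map_rel' := by
    intro a b hab
    rw [cayley_adj] at hab ⊢
    refine ⟨fun hc => hab.1 (mul_left_cancel hc), ?_⟩
    have h1 : (g * a)⁻¹ * (g * b) = a⁻¹ * b := by group
    have h2 : (g * b)⁻¹ * (g * a) = b⁻¹ * a := by group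
    rw [h1, h2]
    exact hab.2

lemma ReachIn.image {G : Type*} [Group G] {S : Set G} {s : Set G} {u v : G}
    (h : ReachIn (cayley G S) s u v) (g : G) :
    ReachIn (cayley G S) ((g * ·) '' s) (g * u) (g * v) := by
  obtain ⟨p, hp⟩ := h
  refine ⟨p.map (mulGHom G S g), fun w hw => ?_⟩
  have hw : w ∈ p.support.map (mulGHom G S g) := by rw [← Walk.support_map]; exact hw
  rw [List.mem_map] at hw
  obtain ⟨a, ha, rfl⟩ := hw
  exact ⟨a, hp a ha, rfl⟩

lemma main_aux {G : Type*} [Group G] (S : Set G)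
    (𝒩 : Set (Set G × Set G))
    (hsep : ∀ p ∈ 𝒩, IsSeparation (cayley G S) p.1 p.2)
    (htight : ∀ p ∈ 𝒩, TightSep (cayley G S) p.1 p.2)
    (hnested : ∀ p ∈ 𝒩, ∀ q ∈ 𝒩, Nested p.1 p.2 q.1 q.2)
    (hGinv : ∀ p ∈ 𝒩, ∀ g : G, ((g * ·) '' p.1, (g * ·) '' p.2) ∈ 𝒩)
    (A B : Set G) (hAB : (A, B) ∈ 𝒩)
    (x y z w : G) (hzw : z ≠ w)
    (hor : (z = x ∧ w = y) ∨ (z = y ∧ w = x))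
    (hzwAB : A ∩ B = {z, w})
    (P : (cayley G S).Walk x y) (hP : P.IsPath)
    (hshort : ∀ Q : (cayley G S).Walk x y, P.length ≤ Q.length)
    (v₁ v₂ v₃ : G) (i : ℕ) (hi : i + 2 ≤ P.length)
    (h1 : P.getVert i = v₁) (h2 : P.getVert (i + 1) = v₂) (h3 : P.getVert (i + 2) = v₃)
    (g : G) (hg : g * v₂ = z) :
    ReachIn (cayley G S) (({z, w} : Set G)ᶜ) (g * v₁) (g * v₃) := by
  classical
  have hinj := getVert_inj hP
  -- the middle vertex is an interior vertex of `P`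
  have hv2x : v₂ ≠ x := by
    intro hc
    have : i + 1 = 0 := hinj (i + 1) 0 (by omega) (by omega) (by rw [h2, Walk.getVert_zero, hc])
    omega
  have hv2y : v₂ ≠ y := by
    intro hc
    have : i + 1 = P.length := hinj (i + 1) P.length (by omega) le_rfl (by rw [h2, Walk.getVert_length, hc])
    omega
  have hv2z : v₂ ≠ z := by rcases hor with ⟨rfl, -⟩ | ⟨rfl, -⟩; exacts [hv2x, hv2y]
  have hv2w : v₂ ≠ w := by rcases hor with ⟨-, rfl⟩ | ⟨-, rfl⟩; exacts [hv2y, hv2x]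
  have hzmem : z ∈ A ∩ B := by rw [hzwAB]; exact Set.mem_insert _ _
  have hwmem : w ∈ A ∩ B := by rw [hzwAB]; exact Set.mem_insert_of_mem _ rfl
  have hxmem : x ∈ A ∩ B := by rcases hor with ⟨rfl, -⟩ | ⟨-, rfl⟩; exacts [hzmem, hwmem]
  have hymem : y ∈ A ∩ B := by rcases hor with ⟨-, rfl⟩ | ⟨rfl, -⟩; exacts [hwmem, hzmem]
  set d : G := g⁻¹ * w with hd_def
  have hgd : g * d = w := by rw [hd_def, mul_inv_cancel_left]
  -- any walk between `z` and `w` has length at least `P.length`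
  have hzwlen : ∀ Q : (cayley G S).Walk z w, P.length ≤ Q.length := by
    intro Q
    rcases hor with ⟨hz', hw'⟩ | ⟨hz', hw'⟩
    · simpa using hshort (Q.copy hz' hw')
    · simpa using hshort (Q.reverse.copy hw' hz')
  have hwzlen : ∀ Q : (cayley G S).Walk w z, P.length ≤ Q.length := by
    intro Q
    simpa using hzwlen Q.reverse
  -- the preimage of the "other" separator vertex is not on `P`
  have hd : d ∉ P.support := by
    intro hdmem
    have hv2mem : v₂ ∈ P.support := h2 ▸ getVert_mem_support P (i + 1)
    have hsplit := P.take_spec hdmem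
    have hv2or : v₂ ∈ (P.takeUntil d hdmem).support ∨ v₂ ∈ (P.dropUntil d hdmem).support := by
      rw [← Walk.mem_support_append_iff, hsplit]; exact hv2mem
    have hlensum : (P.takeUntil d hdmem).length + (P.dropUntil d hdmem).length = P.length := by
      have := congrArg Walk.length hsplit
      rwa [Walk.length_append] at this
    rcases hv2or with hmem | hmem
    · set t := P.takeUntil d hdmem with ht
      have hlen2 : (t.takeUntil v₂ hmem).length + (t.dropUntil v₂ hmem).length = t.length := by
        have := congrArg Walk.length (t.take_spec hmem)
        rwa [Walk.length_append] at this
      have hpos : (t.takeUntil v₂ hmem).length ≠ 0 := by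
        intro hc
        exact hv2x (Walk.eq_of_length_eq_zero hc).symm
      have h5 : t.length ≤ P.length := by omega
      have hfin := hzwlen (((t.dropUntil v₂ hmem).map (mulGHom G S g)).copy hg hgd)
      replace hfin := hfin.trans_eq ((Walk.length_copy _ _ _).trans (Walk.length_map _ _))
      omega
    · set r := P.dropUntil d hdmem with hr
      have hlen2 : (r.takeUntil v₂ hmem).length + (r.dropUntil v₂ hmem).length = r.length := by
        have := congrArg Walk.length (r.take_spec hmem)
        rwa [Walk.length_append] at this
      have hpos : (r.dropUntil v₂ hmem).length ≠ 0 := by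
        intro hc
        exact hv2y (Walk.eq_of_length_eq_zero hc)
      have hfin := hwzlen (((r.takeUntil v₂ hmem).map (mulGHom G S g)).copy hgd hg)
      replace hfin := hfin.trans_eq ((Walk.length_copy _ _ _).trans (Walk.length_map _ _))
      omega
  -- all translated vertices of `P` except position `i+1` avoid `{z, w}`
  have hgood : ∀ k, k ≤ P.length → k ≠ i + 1 → g * P.getVert k ∉ ({z, w} : Set G) := by
    intro k hk hki hc
    rw [Set.mem_insert_iff, Set.mem_singleton_iff] at hc
    rcases hc with hc | hc
    · have hkv : P.getVert k = v₂ := mul_left_cancel (hc.trans hg.symm)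
      exact hki (hinj k (i + 1) hk (by omega) (hkv.trans h2.symm))
    · rw [← hgd] at hc
      exact hd ((mul_left_cancel hc) ▸ getVert_mem_support P k)
  -- the two path segments, translated by `g`
  have seg1 : ReachIn (cayley G S) (({z, w} : Set G)ᶜ) (g * v₁) (g * x) := by
    have h0 := reachIn_getVert P (Nat.zero_le i) (by omega)
    rw [Walk.getVert_zero, h1] at h0
    refine ((h0.image g).mono ?_).symm
    rintro b ⟨a, ⟨k, hk0, hki, rfl⟩, rfl⟩
    simpa using hgood k (by omega) (by omega)
  have seg3 : ReachIn (cayley G S) (({z, w} : Set G)ᶜ) (g * y) (g * v₃) := by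
    have h0 := reachIn_getVert P hi le_rfl
    rw [Walk.getVert_length, h3] at h0
    refine ((h0.image g).mono ?_).symm
    rintro b ⟨a, ⟨k, hk0, hki, rfl⟩, rfl⟩
    simpa using hgood k (by omega) (by omega)
  -- endpoints of the translated path avoid `{z, w}`
  have hgxZ : g * x ∉ ({z, w} : Set G) := by
    rw [Set.mem_insert_iff, Set.mem_singleton_iff]
    rintro (hc | hc)
    · exact hv2x (mul_left_cancel (hg.trans hc.symm))
    · rw [← hgd] at hc
      exact hd ((mul_left_cancel hc) ▸ P.start_mem_support)
  have hgyZ : g * y ∉ ({z, w} : Set G) := by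
    rw [Set.mem_insert_iff, Set.mem_singleton_iff]
    rintro (hc | hc)
    · exact hv2y (mul_left_cancel (hg.trans hc.symm))
    · rw [← hgd] at hc
      exact hd ((mul_left_cancel hc) ▸ P.end_mem_support)
  -- the translated separation
  have hAB' := hGinv (A, B) hAB g
  have hsep' := hsep _ hAB'
  have htight' := htight _ hAB'
  have hN := hnested (A, B) hAB _ hAB'
  simp only [Nested, SepLE] at hN
  have hinter : ((g * ·) '' A) ∩ ((g * ·) '' B) = {g * z, g * w} := by
    rw [← Set.image_inter (mul_right_injective g), hzwAB, Set.image_pair]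
  have hgx : g * x ∈ ((g * ·) '' A) ∩ ((g * ·) '' B) :=
    ⟨⟨x, hxmem.1, rfl⟩, ⟨x, hxmem.2, rfl⟩⟩
  have hgy : g * y ∈ ((g * ·) '' A) ∩ ((g * ·) '' B) :=
    ⟨⟨y, hymem.1, rfl⟩, ⟨y, hymem.2, rfl⟩⟩
  -- `z` lies on exactly one side of the translated separation
  have hzU : z ∈ ((g * ·) '' A) ∪ ((g * ·) '' B) := by
    rw [hsep'.1]; trivial
  have hzI : z ∉ ((g * ·) '' A) ∩ ((g * ·) '' B) := by
    rw [hinter, Set.mem_insert_iff, Set.mem_singleton_iff]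
    rintro (hc | hc)
    · exact hv2z (mul_left_cancel (hg.trans hc))
    · exact hv2w (mul_left_cancel (hg.trans hc))
  rcases hzU with hzA' | hzB'
  · have hzB' : z ∉ (g * ·) '' B := fun hb => hzI ⟨hzA', hb⟩
    have hwA' : w ∈ (g * ·) '' A := by
      rcases hN with ⟨hs1, hs2⟩ | ⟨hs1, hs2⟩ | ⟨hs1, hs2⟩ | ⟨hs1, hs2⟩
      · exact hs1 hwmem.1
      · exact absurd (hs2 hzmem.2) hzB'
      · exact absurd (hs1 hzmem.1) hzB'
      · exact hs2 hwmem.2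
    have hsSide : ∀ u ∈ ((g * ·) '' B) \ ((g * ·) '' A), u ∈ ({z, w} : Set G)ᶜ := by
      intro u hu
      rw [Set.mem_compl_iff, Set.mem_insert_iff, Set.mem_singleton_iff]
      rintro (rfl | rfl)
      · exact hzB' hu.1
      · exact hu.2 hwA'
    exact tightSide_reach htight'.2 hsSide hgx hgy hgxZ hgyZ seg1 seg3
  · have hzA' : z ∉ (g * ·) '' A := fun ha => hzI ⟨ha, hzB'⟩
    have hwB' : w ∈ (g * ·) '' B := by
      rcases hN with ⟨hs1, hs2⟩ | ⟨hs1, hs2⟩ | ⟨hs1, hs2⟩ | ⟨hs1, hs2⟩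
      · exact absurd (hs1 hzmem.1) hzA'
      · exact hs2 hwmem.2
      · exact hs1 hwmem.1
      · exact absurd (hs2 hzmem.2) hzA'
    have hsSide : ∀ u ∈ ((g * ·) '' A) \ ((g * ·) '' B), u ∈ ({z, w} : Set G)ᶜ := by
      intro u hu
      rw [Set.mem_compl_iff, Set.mem_insert_iff, Set.mem_singleton_iff]
      rintro (rfl | rfl)
      · exact hzA' hu.1
      · exact hu.2 hwB'
    exact tightSide_reach htight'.1 hsSide hgx hgy hgxZ hgyZ seg1 seg3

/-- Two-Path Lemma. Let `𝒩` be a `G`-invariant nested set of tight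
separations of the cubic connectivity-two Cayley graph `Γ`, let `(A,B) ∈ 𝒩` be of
Type II with `A ∩ B = {x,y}`, let `P` be a shortest `x`–`y` path, `v₁ v₂ v₃` consecutive
on `P`, and `g ∈ G` with `g v₂ ∈ {x,y}`. Then `g v₁` and `g v₃` lie in the same
component of `Γ - {x,y}`. -/
theorem stmt_13 {G : Type*} [Group G] (S : Set G)
    (hSgen : Subgroup.closure S = ⊤) (hcubic : Cubic (cayley G S))
    (hconn : ConnectivityTwo (cayley G S))
    (𝒩 : Set (Set G × Set G))
    (hsep : ∀ p ∈ 𝒩, IsSeparation (cayley G S) p.1 p.2)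
    (htight : ∀ p ∈ 𝒩, TightSep (cayley G S) p.1 p.2)
    (hnested : ∀ p ∈ 𝒩, ∀ q ∈ 𝒩, Nested p.1 p.2 q.1 q.2)
    (hGinv : ∀ p ∈ 𝒩, ∀ g : G, ((g * ·) '' p.1, (g * ·) '' p.2) ∈ 𝒩)
    (A B : Set G) (hAB : (A, B) ∈ 𝒩) (hII : TypeII (cayley G S) A B)
    (x y : G) (hxy : x ≠ y) (hxyAB : A ∩ B = {x, y})
    (P : (cayley G S).Walk x y) (hP : P.IsPath)
    (hshort : ∀ Q : (cayley G S).Walk x y, P.length ≤ Q.length)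
    (v₁ v₂ v₃ : G) (i : ℕ) (hi : i + 2 ≤ P.length)
    (h1 : P.getVert i = v₁) (h2 : P.getVert (i + 1) = v₂) (h3 : P.getVert (i + 2) = v₃)
    (g : G) (hg : g * v₂ = x ∨ g * v₂ = y) :
    ReachAvoiding (cayley G S) {x, y} (g * v₁) (g * v₃) := by
  rcases hg with hgz | hgz
  · exact main_aux S 𝒩 hsep htight hnested hGinv A B hAB x y x y hxy (Or.inl ⟨rfl, rfl⟩)
      hxyAB P hP hshort v₁ v₂ v₃ i hi h1 h2 h3 g hgz
  · have h := main_aux S 𝒩 hsep htight hnested hGinv A B hAB x y y x hxy.symm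
      (Or.inr ⟨rfl, rfl⟩) (by rw [hxyAB]; exact Set.pair_comm x y) P hP hshort
      v₁ v₂ v₃ i hi h1 h2 h3 g hgz
    show ReachIn (cayley G S) (({x, y} : Set G)ᶜ) (g * v₁) (g * v₃)
    rw [Set.pair_comm x y]
    exact h

end CayleyConn2
end
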